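/- Let A be a finite type and let φ, ψ ∈ EuclideanSpace ℂ A be unit vectors. On EuclideanSpace ℂ (Fin 2 × (A × A)) define the controlled-SWAP operator CSWAP by (CSWAP w)(0, x, y) = w(0, x, y) and (CSWAP w)(1, x, y) = w(1, y, x), and the Hadamard on the control qubit H₁ by (H₁ w)(c, x, y) = (w(0, x, y) + (−1)^c · w(1, x, y))/√2. Let v = H₁(CSWAP(H₁(e_0 ⊗ (φ ⊗ ψ)))). Then Σ_{(x,y) ∈ A × A} |v(1, x, y)|² = 1/2 − |⟨φ, ψ⟩|²/2. (Correctness of the swap test: measuring the control qubit of the swap-test circuit yields outcome 1 with probability 1/2 − |⟨φ|ψ⟩|²/2.) -/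

import Mathlib

/-- Pure tensor: `(u ⊗ w)(a, b) = u a * w b`. -/
def tens {A B : Type*} (u : EuclideanSpace ℂ A) (w : EuclideanSpace ℂ B) :
    EuclideanSpace ℂ (A × B) :=
  WithLp.toLp 2 fun p => u p.1 * w p.2

/-- Controlled-SWAP: `(CSWAP w)(0,x,y) = w(0,x,y)`,
`(CSWAP w)(1,x,y) = w(1,y,x)`. -/
def cswap {A : Type*} (w : EuclideanSpace ℂ (Fin 2 × (A × A))) :
    EuclideanSpace ℂ (Fin 2 × (A × A)) :=
  WithLp.toLp 2 fun p => if p.1 = 0 then w p else w (p.1, (p.2.2, p.2.1))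

/-- Hadamard on the control qubit:
`(H₁ w)(c, x, y) = (w(0,x,y) + (−1)^c · w(1,x,y))/√2`. -/
noncomputable def hadControl {A : Type*} (w : EuclideanSpace ℂ (Fin 2 × (A × A))) :
    EuclideanSpace ℂ (Fin 2 × (A × A)) :=
  WithLp.toLp 2 fun p => (w (0, p.2) + (-1 : ℂ) ^ (p.1 : ℕ) * w (1, p.2)) / (Real.sqrt 2 : ℂ)

/-!
The circuit maps the control-1 component of `|0⟩ ⊗ w` to the antisymmetric part `(w - S w) / 2`,
where `S` exchanges the two registers. Since `S` is unitary, its squared norm is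
`(‖w‖² - Re ⟨w, S w⟩) / 2`, and for `w = φ ⊗ ψ` one has `S w = ψ ⊗ φ` and
`⟨φ ⊗ ψ, ψ ⊗ φ⟩ = ⟨φ, ψ⟩⟨ψ, φ⟩ = |⟨φ, ψ⟩|²`.
-/

open scoped InnerProductSpace

section Tensor

variable {A B : Type*}

@[simp]
theorem tens_apply (u : EuclideanSpace ℂ A) (w : EuclideanSpace ℂ B) (p : A × B) :
    tens u w p = u p.1 * w p.2 := rfl

theorem inner_tens_tens [Fintype A] [Fintype B] (u u' : EuclideanSpace ℂ A)
    (w w' : EuclideanSpace ℂ B) :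
    ⟪tens u w, tens u' w'⟫_ℂ = ⟪u, u'⟫_ℂ * ⟪w, w'⟫_ℂ := by
  simp only [PiLp.inner_apply, RCLike.inner_apply, tens_apply, Fintype.sum_prod_type,
    Finset.sum_mul_sum, map_mul]
  exact Finset.sum_congr rfl fun _ _ => Finset.sum_congr rfl fun _ _ => by ring

theorem norm_tens [Fintype A] [Fintype B] (u : EuclideanSpace ℂ A) (w : EuclideanSpace ℂ B) :
    ‖tens u w‖ = ‖u‖ * ‖w‖ := by
  rw [← pow_left_inj₀ (norm_nonneg _) (by positivity) two_ne_zero, mul_pow,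
    @norm_sq_eq_re_inner ℂ, inner_tens_tens, inner_self_eq_norm_sq_to_K,
    inner_self_eq_norm_sq_to_K]
  norm_cast

end Tensor

section SwapTest

variable {A : Type*} [Fintype A]

noncomputable def swapRegisters : EuclideanSpace ℂ (A × A) ≃ₗᵢ[ℂ] EuclideanSpace ℂ (A × A) :=
  LinearIsometryEquiv.piLpCongrLeft 2 ℂ ℂ (Equiv.prodComm A A)

@[simp]
theorem swapRegisters_apply (w : EuclideanSpace ℂ (A × A)) (p : A × A) :
    swapRegisters w p = w p.swap := by
  simp [swapRegisters, LinearIsometryEquiv.piLpCongrLeft_apply, Equiv.piCongrLeft']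

theorem swapRegisters_tens (u w : EuclideanSpace ℂ A) :
    swapRegisters (tens u w) = tens w u := by
  ext p; simp [mul_comm]

noncomputable def swapTestCircuit (w : EuclideanSpace ℂ (A × A)) :
    EuclideanSpace ℂ (Fin 2 × (A × A)) :=
  hadControl (cswap (hadControl (tens (EuclideanSpace.single (0 : Fin 2) 1) w)))

theorem swapTestCircuit_apply_one (w : EuclideanSpace ℂ (A × A)) (p : A × A) :
    swapTestCircuit w (1, p) = (2⁻¹ : ℂ) • (w - swapRegisters w) p := by
  have hsqrt : (Real.sqrt 2 : ℂ) * Real.sqrt 2 = 2 := by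
    exact_mod_cast Real.mul_self_sqrt zero_le_two
  simp only [swapTestCircuit, hadControl, cswap, tens_apply, PiLp.toLp_apply, ↓reduceIte,
    PiLp.single_eq_same, one_mul, Fin.coe_ofNat_eq_mod, ne_eq, one_ne_zero,
    not_false_eq_true, PiLp.single_eq_of_ne, zero_mul, mul_zero, add_zero, Nat.mod_succ, pow_one,
    neg_mul, PiLp.sub_apply, swapRegisters_apply, smul_eq_mul]
  rw [← sub_eq_add_neg, ← sub_div, div_div, hsqrt, div_eq_inv_mul]
  rfl

theorem sum_norm_sq_swapTestCircuit_apply_one (w : EuclideanSpace ℂ (A × A)) :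
    ∑ p : A × A, ‖swapTestCircuit w (1, p)‖ ^ 2 =
      (‖w‖ ^ 2 - RCLike.re ⟪w, swapRegisters w⟫_ℂ) / 2 := by
  calc _ = ‖(2⁻¹ : ℂ) • (w - swapRegisters w)‖ ^ 2 := by
        simp_rw [swapTestCircuit_apply_one]
        exact (EuclideanSpace.norm_sq_eq ((2⁻¹ : ℂ) • (w - swapRegisters w))).symm
    _ = _ := by
        rw [norm_smul, mul_pow, @norm_sub_sq ℂ, LinearIsometryEquiv.norm_map, norm_inv,
          Complex.norm_two]
        ring

end SwapTest

theorem swap_test_correctness_general {A : Type*} [Fintype A]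
    (φ ψ : EuclideanSpace ℂ A) (hφ : ‖φ‖ = 1) (hψ : ‖ψ‖ = 1) :
    (∑ p : A × A, ‖
        ((hadControl (cswap (hadControl
          (tens (EuclideanSpace.single (0 : Fin 2) 1) (tens φ ψ))))) (1, p))‖ ^ 2) =
      1 / 2 - ‖(inner ℂ φ ψ : ℂ)‖ ^ 2 / 2 := by
  calc _ = (‖tens φ ψ‖ ^ 2 - RCLike.re ⟪tens φ ψ, swapRegisters (tens φ ψ)⟫_ℂ) / 2 :=
        sum_norm_sq_swapTestCircuit_apply_one _
    _ = _ := by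
        rw [norm_tens, hφ, hψ, swapRegisters_tens, inner_tens_tens, ← inner_conj_symm ψ φ,
          RCLike.mul_conj]
        norm_cast
        ring

/-- Correctness of the swap test: measuring the control qubit of the swap-test
circuit on input `|0⟩ ⊗ |φ⟩ ⊗ |ψ⟩` yields outcome `1` with probability
`1/2 − |⟨φ,ψ⟩|²/2`. -/
theorem swap_test_correctness {A : Type*} [Fintype A] [DecidableEq A]
    (φ ψ : EuclideanSpace ℂ A) (hφ : ‖φ‖ = 1) (hψ : ‖ψ‖ = 1) :
    (∑ p : A × A, ‖
        ((hadControl (cswap (hadControl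
          (tens (EuclideanSpace.single (0 : Fin 2) 1) (tens φ ψ))))) (1, p))‖ ^ 2) =
      1 / 2 - ‖(inner ℂ φ ψ : ℂ)‖ ^ 2 / 2 :=
  swap_test_correctness_general φ ψ hφ hψ
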